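/- arXiv:2310.06163 — 2 statements merged into one kernel-verified Lean document; each statement's English description precedes it below -/
import Mathlib

section
/- Let F be a field, let M, N be F[X]-modules, and suppose f : M → N and g : N → M are F[X]-linear maps with f ∘ g = X·id_N and g ∘ f = X·id_M. Let K_M = ker(X : M → M) and K_N = ker(X : N → N), and assume K_M and K_N are finite-dimensional over F. If every element of K_M lies in X·M, then dim_F K_M ≤ dim_F K_N. -/
theorem stmt6 {F : Type*} [Field F] {M N : Type*}
    [AddCommGroup M] [AddCommGroup N]
    [Module (Polynomial F) M] [Module (Polynomial F) N]
    [Module F M] [Module F N]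
    [IsScalarTower F (Polynomial F) M] [IsScalarTower F (Polynomial F) N]
    (f : M →ₗ[Polynomial F] N) (g : N →ₗ[Polynomial F] M)
    (hfg : ∀ y : N, f (g y) = (Polynomial.X : Polynomial F) • y)
    (hgf : ∀ x : M, g (f x) = (Polynomial.X : Polynomial F) • x)
    [FiniteDimensional F
      ((LinearMap.ker (LinearMap.lsmul (Polynomial F) M (Polynomial.X : Polynomial F))).restrictScalars F)]
    [FiniteDimensional F
      ((LinearMap.ker (LinearMap.lsmul (Polynomial F) N (Polynomial.X : Polynomial F))).restrictScalars F)]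
    (hker : ∀ x : M, (Polynomial.X : Polynomial F) • x = 0 →
      ∃ z : M, x = (Polynomial.X : Polynomial F) • z) :
    Module.finrank F
        ((LinearMap.ker (LinearMap.lsmul (Polynomial F) M (Polynomial.X : Polynomial F))).restrictScalars F) ≤
      Module.finrank F
        ((LinearMap.ker (LinearMap.lsmul (Polynomial F) N (Polynomial.X : Polynomial F))).restrictScalars F) := by
  set KM := (LinearMap.ker (LinearMap.lsmul (Polynomial F) M (Polynomial.X : Polynomial F))).restrictScalars F with hKM
  set KN := (LinearMap.ker (LinearMap.lsmul (Polynomial F) N (Polynomial.X : Polynomial F))).restrictScalars F with hKN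
  have memM : ∀ x : M, x ∈ KM ↔ (Polynomial.X : Polynomial F) • x = 0 := by
    intro x; simp [hKM, LinearMap.mem_ker]
  have memN : ∀ y : N, y ∈ KN ↔ (Polynomial.X : Polynomial F) • y = 0 := by
    intro y; simp [hKN, LinearMap.mem_ker]
  have hf0 : ∀ x ∈ KM, f x ∈ KN := by
    intro x hx
    rw [memN]
    rw [memM] at hx
    rw [← map_smul, hx, map_zero]
  have hg0 : ∀ y ∈ KN, g y ∈ KM := by
    intro y hy
    rw [memM]
    rw [memN] at hy
    rw [← map_smul, hy, map_zero]
  let f₀ : KM →ₗ[F] KN := (f.restrictScalars F).restrict hf0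
  let g₀ : KN →ₗ[F] KM := (g.restrictScalars F).restrict hg0
  -- range f₀ ≤ ker g₀
  have h1 : LinearMap.range f₀ ≤ LinearMap.ker g₀ := by
    rintro y ⟨⟨x, hx⟩, rfl⟩
    have : g (f x) = 0 := by
      rw [hgf]
      exact (memM x).mp hx
    ext
    exact this
  -- ker f₀ ≤ range g₀
  have h2 : LinearMap.ker f₀ ≤ LinearMap.range g₀ := by
    rintro ⟨x, hx⟩ hfx
    have hx0 : (Polynomial.X : Polynomial F) • x = 0 := (memM x).mp hx
    obtain ⟨z, hz⟩ := hker x hx0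
    have hfz : f z ∈ KN := by
      rw [memN, ← map_smul, ← hz]
      have : f x = 0 := congrArg Subtype.val hfx
      exact this
    refine ⟨⟨f z, hfz⟩, ?_⟩
    ext
    show g (f z) = x
    rw [hgf, ← hz]
  have rn1 := LinearMap.finrank_range_add_finrank_ker f₀
  have rn2 := LinearMap.finrank_range_add_finrank_ker g₀
  have b1 : Module.finrank F (LinearMap.range f₀) ≤ Module.finrank F (LinearMap.ker g₀) :=
    Submodule.finrank_mono h1
  have b2 : Module.finrank F (LinearMap.ker f₀) ≤ Module.finrank F (LinearMap.range g₀) :=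
    Submodule.finrank_mono h2
  omega
end

section
/- Let F be a field. Suppose M and N are finitely generated F[X]-modules and there exist F[X]-linear maps f : M → N and g : N → M with f ∘ g = X·id_N and g ∘ f = X·id_M. Then the torsion submodules of M and N localized away from X agree; more precisely, for every irreducible polynomial p ∈ F[X] with p ≠ X (up to units), the p-primary torsion components of M and N are isomorphic. -/
theorem stmt11 {F : Type*} [Field F] {M N : Type*}
    [AddCommGroup M] [AddCommGroup N]
    [Module (Polynomial F) M] [Module (Polynomial F) N]
    [Module.Finite (Polynomial F) M] [Module.Finite (Polynomial F) N]
    (f : M →ₗ[Polynomial F] N) (g : N →ₗ[Polynomial F] M)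
    (hfg : ∀ y : N, f (g y) = (Polynomial.X : Polynomial F) • y)
    (hgf : ∀ x : M, g (f x) = (Polynomial.X : Polynomial F) • x)
    (p : Polynomial F) (hp : Irreducible p)
    (hpX : ¬ Associated p (Polynomial.X : Polynomial F)) :
    Nonempty
      (↥(⨆ k : ℕ, Submodule.torsionBy (Polynomial F) M (p ^ k)) ≃ₗ[Polynomial F]
        ↥(⨆ k : ℕ, Submodule.torsionBy (Polynomial F) N (p ^ k))) := by
  classical

  -- coprimality of p^k and X
  have hpd : ¬ p ∣ (Polynomial.X : Polynomial F) := fun h =>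
    hpX (hp.associated_of_dvd Polynomial.irreducible_X h)
  have hcop : ∀ k : ℕ, IsCoprime ((p ^ k : Polynomial F)) (Polynomial.X : Polynomial F) := fun k =>
    (hp.coprime_iff_not_dvd.2 hpd).pow_left
  -- directedness
  have hmonoM : Monotone (fun k : ℕ => Submodule.torsionBy (Polynomial F) M (p ^ k)) :=
    fun _ _ hkl => Submodule.torsionBy_le_torsionBy_of_dvd _ _ (pow_dvd_pow p hkl)
  have hmonoN : Monotone (fun k : ℕ => Submodule.torsionBy (Polynomial F) N (p ^ k)) :=
    fun _ _ hkl => Submodule.torsionBy_le_torsionBy_of_dvd _ _ (pow_dvd_pow p hkl)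
  have memM : ∀ x : M, x ∈ (⨆ k : ℕ, Submodule.torsionBy (Polynomial F) M (p ^ k)) ↔
      ∃ k : ℕ, (p ^ k) • x = 0 := by
    intro x
    rw [Submodule.mem_iSup_of_directed _ hmonoM.directed_le]
    simp [Submodule.mem_torsionBy_iff]
  have memN : ∀ y : N, y ∈ (⨆ k : ℕ, Submodule.torsionBy (Polynomial F) N (p ^ k)) ↔
      ∃ k : ℕ, (p ^ k) • y = 0 := by
    intro y
    rw [Submodule.mem_iSup_of_directed _ hmonoN.directed_le]
    simp [Submodule.mem_torsionBy_iff]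
  have hfmap : ∀ x ∈ (⨆ k : ℕ, Submodule.torsionBy (Polynomial F) M (p ^ k)),
      f x ∈ (⨆ k : ℕ, Submodule.torsionBy (Polynomial F) N (p ^ k)) := by
    intro x hx
    obtain ⟨k, hk⟩ := (memM x).1 hx
    exact (memN _).2 ⟨k, by rw [← map_smul, hk, map_zero]⟩
  set f' := f.restrict hfmap with hf'
  have hinj : Function.Injective f' := by
    intro x y hxy
    obtain ⟨k, hk⟩ := (memM (x - y : M)).1 (Submodule.sub_mem _ x.2 y.2)
    obtain ⟨a, b, hab⟩ := hcop k
    have hfz : f ((x : M) - y) = 0 := by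
      rw [map_sub, sub_eq_zero]
      exact congrArg Subtype.val hxy
    have hX : (Polynomial.X : Polynomial F) • ((x : M) - y) = 0 := by
      have h2 := hgf ((x : M) - y)
      rw [hfz, map_zero] at h2
      exact h2.symm
    have : ((x : M) - y) = (a * p ^ k + b * Polynomial.X) • ((x : M) - y) := by
      rw [hab, one_smul]
    rw [add_smul, mul_smul, mul_smul, hk, hX, smul_zero, smul_zero, add_zero] at this
    exact Subtype.ext (sub_eq_zero.1 this)
  have hsurj : Function.Surjective f' := by
    rintro ⟨y, hy⟩
    obtain ⟨k, hk⟩ := (memN y).1 hy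
    obtain ⟨a, b, hab⟩ := hcop k
    refine ⟨⟨b • g y, (memM _).2 ⟨k, by rw [smul_comm, ← map_smul, hk, map_zero, smul_zero]⟩⟩, ?_⟩
    apply Subtype.ext
    show f (b • g y) = y
    rw [map_smul, hfg]
    calc b • (Polynomial.X : Polynomial F) • y = (b * Polynomial.X) • y := (mul_smul _ _ _).symm
    _ = (a * p ^ k) • y + (b * Polynomial.X) • y := by
        have h0 : (a * p ^ k) • y = 0 := by rw [mul_smul, hk, smul_zero]
        rw [h0, zero_add]
    _ = ((a * p ^ k + b * Polynomial.X) : Polynomial F) • y := (add_smul _ _ _).symm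
    _ = y := by rw [hab, one_smul]
  exact ⟨LinearEquiv.ofBijective f' ⟨hinj, hsurj⟩⟩
end
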